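/- arXiv:1612.02778 — 2 statements merged into one kernel-verified Lean document; each statement's English description precedes it below -/
import Mathlib

section
/- With P_h and Q_h the numerator and denominator convergent polynomials of the square series J-fraction, for every h ≥ 1 and every 0 ≤ n ≤ h, the coefficient of z^n in the formal power series expansion of P_h(q,z)/Q_h(q,z) (expanded about z = 0) equals q^{n²}. -/
/-- The rational function field in the indeterminate `q`. -/
noncomputable abbrev Kq : Type := RatFunc ℚ

/-- The indeterminate `q` of the rational function field. -/
noncomputable def qvar : Kq := RatFunc.X

/-- The numerator convergents `P_h(q, z)`, as formal power series in `z = X` over the field of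
rational functions in `q`. -/
noncomputable def Pser : ℕ → PowerSeries Kq
  | 0 => 0
  | 1 => 1
  | (h + 2) =>
      (1 - PowerSeries.C (R := Kq) (qvar ^ (2 * (h + 2) - 3) *
            (qvar ^ (2 * (h + 2)) + qvar ^ (2 * (h + 2) - 2) - 1)) * PowerSeries.X) *
          Pser (h + 1)
        - PowerSeries.C (R := Kq) (qvar ^ (6 * (h + 2) - 10) * (qvar ^ (2 * (h + 2) - 2) - 1)) *
            PowerSeries.X ^ 2 * Pser h

/-- The denominator convergents `Q_h(q, z)`, as formal power series in `z = X` over the field of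
rational functions in `q`. -/
noncomputable def Qser : ℕ → PowerSeries Kq
  | 0 => 1
  | 1 => 1 - PowerSeries.C (R := Kq) qvar * PowerSeries.X
  | (h + 2) =>
      (1 - PowerSeries.C (R := Kq) (qvar ^ (2 * (h + 2) - 3) *
            (qvar ^ (2 * (h + 2)) + qvar ^ (2 * (h + 2) - 2) - 1)) * PowerSeries.X) *
          Qser (h + 1)
        - PowerSeries.C (R := Kq) (qvar ^ (6 * (h + 2) - 10) * (qvar ^ (2 * (h + 2) - 2) - 1)) *
            PowerSeries.X ^ 2 * Qser h

/-!
Let `H₀ = 1` and `H_{g+1} = ∑ₙ q^{n² + 2gn} [n+g choose n]_{q²} zⁿ`. These series are the tails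
of the J-fraction: `H_g = (1 - c_{g+1} z) H_{g+1} - ab_{g+2} z² H_{g+2}`, which on coefficients
reduces to the `q²`-Pascal rule and the ratio rule for consecutive Gaussian binomials.
Since `P_h` and `Q_h` obey the same three-term recurrence, induction on `h` gives
`H₁ Q_h - P_h = z^{2h} ab₂ ⋯ ab_{h+1} H_{h+1}`. Hence `P_h / Q_h` agrees with
`H₁ = ∑ₙ q^{n²} zⁿ` up to order `z^{2h}`.
-/

open PowerSeries Finset

section GaussBinom

variable {R : Type*} [CommRing R] (t : R)

/-- The Gaussian binomial coefficient `[m choose n]_t`, via the `t`-Pascal rule. The truncated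
exponent `m - n` is harmless: for `m < n` both terms on the right vanish. -/
def gaussBinom : ℕ → ℕ → R
  | _, 0 => 1
  | 0, _ + 1 => 0
  | m + 1, n + 1 => gaussBinom m (n + 1) + t ^ (m - n) * gaussBinom m n

@[simp] lemma gaussBinom_zero_right (m : ℕ) : gaussBinom t m 0 = 1 := by
  cases m <;> rfl

lemma gaussBinom_succ_succ (m n : ℕ) :
    gaussBinom t (m + 1) (n + 1) = gaussBinom t m (n + 1) + t ^ (m - n) * gaussBinom t m n := rfl

lemma gaussBinom_eq_zero_of_lt {m n : ℕ} (h : m < n) : gaussBinom t m n = 0 := by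
  induction m generalizing n with
  | zero => obtain ⟨n, rfl⟩ := Nat.exists_eq_succ_of_ne_zero h.ne'; rfl
  | succ m ih =>
    obtain ⟨n, rfl⟩ := Nat.exists_eq_succ_of_ne_zero (Nat.ne_zero_of_lt h)
    rw [gaussBinom_succ_succ, ih (by omega), ih (by omega), mul_zero, add_zero]

@[simp] lemma gaussBinom_self (n : ℕ) : gaussBinom t n n = 1 := by
  induction n with
  | zero => rfl
  | succ n ih => simp [gaussBinom_succ_succ, gaussBinom_eq_zero_of_lt t n.lt_succ_self, ih]

lemma one_sub_pow_mul_gaussBinom_succ (m n : ℕ) :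
    (1 - t ^ (n + 1)) * gaussBinom t m (n + 1) = (1 - t ^ (m - n)) * gaussBinom t m n := by
  induction m generalizing n with
  | zero => simp [gaussBinom_eq_zero_of_lt]
  | succ m ih =>
    rcases n with _ | n
    · have h₀ := ih 0
      simp only [gaussBinom_succ_succ, gaussBinom_zero_right, Nat.sub_zero] at h₀ ⊢
      linear_combination h₀
    rcases le_or_gt m n with hmn | hnm
    · simp [gaussBinom_eq_zero_of_lt t (show m + 1 < n + 2 by omega), Nat.sub_eq_zero_of_le hmn]
    obtain ⟨d, rfl⟩ := Nat.exists_eq_add_of_lt hnm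
    have h₁ := ih (n + 1)
    have h₀ := ih n
    simp only [gaussBinom_succ_succ t (n + d + 1), show n + d + 1 - (n + 1) = d by omega,
      show n + d + 1 - n = d + 1 by omega, show n + d + 1 + 1 - (n + 1) = d + 1 by omega]
      at h₁ h₀ ⊢
    linear_combination h₁ + t ^ (d + 1) * h₀

end GaussBinom

section Convergents

variable {S : Type*} [CommRing S] {z : S} {c a P Q H : ℕ → S}

theorem tail_one_mul_den_sub_num
    (hP : ∀ h, P (h + 2) = (1 - c (h + 2) * z) * P (h + 1) - a (h + 2) * z ^ 2 * P h)
    (hQ : ∀ h, Q (h + 2) = (1 - c (h + 2) * z) * Q (h + 1) - a (h + 2) * z ^ 2 * Q h)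
    (hH : ∀ g, H g = (1 - c (g + 1) * z) * H (g + 1) - a (g + 2) * z ^ 2 * H (g + 2))
    (hP0 : P 0 = 0) (hP1 : P 1 = 1) (hQ0 : Q 0 = 1) (hQ1 : Q 1 = 1 - c 1 * z) (hH0 : H 0 = 1)
    (h : ℕ) : H 1 * Q h - P h = z ^ (2 * h) * ((∏ k ∈ range h, a (k + 2)) * H (h + 1)) := by
  induction h using Nat.twoStepInduction with
  | zero => simp [hP0, hQ0]
  | one =>
    have h₀ := hH 0
    rw [hH0, zero_add, zero_add] at h₀
    rw [hP1, hQ1, prod_range_one]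
    linear_combination -h₀
  | more h ih₀ ih₁ =>
    rw [hP, hQ, prod_range_succ, prod_range_succ]
    rw [prod_range_succ] at ih₁
    linear_combination (1 - c (h + 2) * z) * ih₁ - a (h + 2) * z ^ 2 * ih₀
      - z ^ (2 * (h + 1)) * (∏ k ∈ range h, a (k + 2)) * a (h + 2) * hH (h + 1)

end Convergents

section JFraction

variable {R : Type*} [CommRing R]

lemma coeff_zero_one_sub_C_mul_X_mul_sub (a b : R) (f g : R⟦X⟧) :
    coeff 0 ((1 - C a * X) * f - C b * X ^ 2 * g) = coeff 0 f := by
  simp [sub_mul, mul_assoc]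

lemma coeff_one_one_sub_C_mul_X_mul_sub (a b : R) (f g : R⟦X⟧) :
    coeff 1 ((1 - C a * X) * f - C b * X ^ 2 * g) = coeff 1 f - a * coeff 0 f := by
  simp [sub_mul, mul_assoc, coeff_X_pow_mul']

lemma coeff_add_two_one_sub_C_mul_X_mul_sub (a b : R) (f g : R⟦X⟧) (n : ℕ) :
    coeff (n + 2) ((1 - C a * X) * f - C b * X ^ 2 * g) =
      coeff (n + 2) f - a * coeff (n + 1) f - b * coeff n g := by
  simp [sub_mul, mul_assoc, coeff_X_pow_mul']

def jfracC (q : R) : ℕ → R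
  | 1 => q
  | h => q ^ (2 * h - 3) * (q ^ (2 * h) + q ^ (2 * h - 2) - 1)

/-- The coefficient `ab_h`; the truncated exponents make it meaningful only for `h ≥ 2`. -/
def jfracAB (q : R) (h : ℕ) : R := q ^ (6 * h - 10) * (q ^ (2 * h - 2) - 1)

/-- The tail `H_g` of the J-fraction. -/
noncomputable def jfracTail (q : R) : ℕ → R⟦X⟧
  | 0 => 1
  | g + 1 => mk fun n => q ^ (n ^ 2 + 2 * g * n) * gaussBinom (q ^ 2) (n + g) n

@[simp] lemma jfracTail_zero (q : R) : jfracTail q 0 = 1 := rfl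

lemma coeff_jfracTail_succ (q : R) (g n : ℕ) :
    coeff n (jfracTail q (g + 1)) = q ^ (n ^ 2 + 2 * g * n) * gaussBinom (q ^ 2) (n + g) n := by
  rw [jfracTail, coeff_mk]

lemma coeff_jfracTail_one (q : R) (n : ℕ) : coeff n (jfracTail q 1) = q ^ (n ^ 2) := by
  simp [coeff_jfracTail_succ]

lemma jfracC_add_two (q : R) (h : ℕ) :
    jfracC q (h + 2) = q ^ (2 * h + 1) * (q ^ (2 * h + 4) + q ^ (2 * h + 2) - 1) := by
  simp only [jfracC, show 2 * (h + 2) - 3 = 2 * h + 1 by omega,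
    show 2 * (h + 2) - 2 = 2 * h + 2 by omega]
  ring

lemma jfracAB_add_two (q : R) (h : ℕ) :
    jfracAB q (h + 2) = q ^ (6 * h + 2) * (q ^ (2 * h + 2) - 1) := by
  simp only [jfracAB, show 6 * (h + 2) - 10 = 6 * h + 2 by omega,
    show 2 * (h + 2) - 2 = 2 * h + 2 by omega]

lemma jfracTail_zero_eq (q : R) : jfracTail q 0 =
    (1 - C (jfracC q 1) * X) * jfracTail q 1 - C (jfracAB q 2) * X ^ 2 * jfracTail q 2 := by
  ext (_ | _ | n)
  · simp [coeff_zero_one_sub_C_mul_X_mul_sub, coeff_jfracTail_succ]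
  · simp [coeff_one_one_sub_C_mul_X_mul_sub, coeff_jfracTail_succ, jfracC]
  · rw [coeff_add_two_one_sub_C_mul_X_mul_sub, jfracTail_zero, coeff_one, if_neg (by omega)]
    simp only [coeff_jfracTail_succ, jfracC, jfracAB_add_two, add_zero, gaussBinom_self]
    have hr := one_sub_pow_mul_gaussBinom_succ (q ^ 2) (n + 1) n
    simp only [gaussBinom_self, show n + 1 - n = 1 by omega] at hr
    -- `ring_nf` also brings the ℕ-arguments of `gaussBinom` to a common normal form
    ring_nf at hr ⊢
    linear_combination (q ^ (n ^ 2 + 2 * n + 2)) * hr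

lemma jfracTail_succ_eq (q : R) (g : ℕ) : jfracTail q (g + 1) =
    (1 - C (jfracC q (g + 2)) * X) * jfracTail q (g + 2)
      - C (jfracAB q (g + 3)) * X ^ 2 * jfracTail q (g + 3) := by
  ext (_ | _ | n)
  · simp [coeff_zero_one_sub_C_mul_X_mul_sub, coeff_jfracTail_succ]
  · rw [coeff_one_one_sub_C_mul_X_mul_sub]
    simp only [coeff_jfracTail_succ, jfracC_add_two, gaussBinom_zero_right]
    have hr := one_sub_pow_mul_gaussBinom_succ (q ^ 2) (g + 1) 0
    have hp := gaussBinom_succ_succ (q ^ 2) (g + 1) 0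
    simp only [Nat.sub_zero, gaussBinom_zero_right] at hr hp
    ring_nf at hr hp ⊢
    linear_combination (q ^ (2 * g + 1)) * hr - (q ^ (2 * g + 3)) * hp
  · rw [coeff_add_two_one_sub_C_mul_X_mul_sub]
    simp only [coeff_jfracTail_succ, jfracC_add_two, jfracAB_add_two]
    have hr₁ := one_sub_pow_mul_gaussBinom_succ (q ^ 2) (n + 2 + g) (n + 1)
    have hr₀ := one_sub_pow_mul_gaussBinom_succ (q ^ 2) (n + 2 + g) n
    have hp := gaussBinom_succ_succ (q ^ 2) (n + 2 + g) (n + 1)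
    simp only [show n + 2 + g - (n + 1) = g + 1 by omega, show n + 2 + g - n = g + 2 by omega]
      at hr₁ hr₀ hp
    ring_nf at hr₁ hr₀ hp ⊢
    linear_combination (q ^ ((n + 2) ^ 2 + 2 * g * (n + 2))) * hr₁
      + (q ^ ((n + 2) ^ 2 + 2 * g * (n + 2) + 2 * (g + 2))) * hr₀
      - (q ^ ((n + 2) ^ 2 + 2 * g * (n + 2) + 2 * (n + 2))) * hp

lemma jfracTail_eq (q : R) (g : ℕ) : jfracTail q g =
    (1 - C (jfracC q (g + 1)) * X) * jfracTail q (g + 1)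
      - C (jfracAB q (g + 2)) * X ^ 2 * jfracTail q (g + 2) := by
  rcases g with _ | g
  exacts [jfracTail_zero_eq q, jfracTail_succ_eq q g]

end JFraction

theorem PowerSeries.coeff_mul_inv_eq_of_mul_sub_eq_X_pow_mul {k : Type*} [Field k]
    {F P Q G : k⟦X⟧} {m n : ℕ} (hQ : constantCoeff Q ≠ 0) (h : F * Q - P = X ^ m * G)
    (hn : n < m) : coeff n (P * Q⁻¹) = coeff n F := by
  have hPQ : P * Q⁻¹ = F - X ^ m * (G * Q⁻¹) := by
    linear_combination (-Q⁻¹) * h + F * PowerSeries.mul_inv_cancel Q hQ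
  rw [hPQ, map_sub, coeff_X_pow_mul', if_neg (by omega), sub_zero]

lemma Pser_add_two (h : ℕ) : Pser (h + 2) = (1 - C (jfracC qvar (h + 2)) * X) * Pser (h + 1)
    - C (jfracAB qvar (h + 2)) * X ^ 2 * Pser h := by
  rw [Pser]; rfl

lemma Qser_add_two (h : ℕ) : Qser (h + 2) = (1 - C (jfracC qvar (h + 2)) * X) * Qser (h + 1)
    - C (jfracAB qvar (h + 2)) * X ^ 2 * Qser h := by
  rw [Qser]; rfl

lemma Qser_one : Qser 1 = 1 - C (jfracC qvar 1) * X := by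
  rw [Qser]; rfl

lemma constantCoeff_Qser (h : ℕ) : constantCoeff (Qser h) = 1 := by
  induction h using Nat.twoStepInduction with
  | zero => simp [Qser]
  | one => simp [Qser_one]
  | more h ih₀ ih₁ => simp [Qser_add_two, ih₀, ih₁]

lemma jfracTail_one_mul_Qser_sub_Pser (h : ℕ) :
    jfracTail qvar 1 * Qser h - Pser h =
      X ^ (2 * h) * ((∏ k ∈ range h, C (jfracAB qvar (k + 2))) * jfracTail qvar (h + 1)) :=
  tail_one_mul_den_sub_num (c := fun h => C (jfracC qvar h)) (a := fun h => C (jfracAB qvar h))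
    Pser_add_two Qser_add_two (jfracTail_eq qvar) (by rw [Pser]) (by rw [Pser]) (by rw [Qser])
    Qser_one rfl h

lemma coeff_Pser_mul_inv_Qser {h n : ℕ} (hn : n < 2 * h) :
    coeff n (Pser h * (Qser h)⁻¹) = qvar ^ (n ^ 2) := by
  rw [coeff_mul_inv_eq_of_mul_sub_eq_X_pow_mul (by simp [constantCoeff_Qser])
    (jfracTail_one_mul_Qser_sub_Pser h) hn, coeff_jfracTail_one]

theorem stmt7 (h n : ℕ) (hh : 1 ≤ h) (hn : n ≤ h) :
    PowerSeries.coeff (R := Kq) n (Pser h * (Qser h)⁻¹) = qvar ^ (n ^ 2) :=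
  coeff_Pser_mul_inv_Qser (by omega)
end

section
/- For complex q with 0 < |q| < 1 and complex z with |z| ≤ 1, the denominator convergents Q_h(q,z) = ∑_{i=0}^{h}[h,i]_{q²}q^{(2h-1)i}(-z)^i converge to 1 as h → ∞. -/
open Finset Filter

/-- The q-Pochhammer symbol `(a; q)_n = ∏_{j=0}^{n-1} (1 - a q^j)`. -/
noncomputable def qPoch {K : Type*} [Field K] (q a : K) (n : ℕ) : K :=
  ∏ j ∈ Finset.range n, (1 - a * q ^ j)

/-- The Gaussian (q-binomial) coefficient `[n, m]_q`. -/
noncomputable def qBinom {K : Type*} [Field K] (q : K) (n m : ℕ) : K :=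
  qPoch q q n / (qPoch q q m * qPoch q q (n - m))

/-- The denominator convergents `Q_h(q, z) = ∑_{i=0}^h [h,i]_{q²} q^{(2h-1)i} (-z)^i`. -/
noncomputable def Qc (q z : ℂ) (h : ℕ) : ℂ :=
  ∑ i ∈ Finset.range (h + 1), qBinom (q ^ 2) h i * q ^ ((2 * h - 1) * i) * (-z) ^ i

lemma exp_neg_le_one_sub {t : ℝ} (ht : 0 ≤ t) (ht1 : t < 1) :
    Real.exp (-(t / (1 - t))) ≤ 1 - t := by
  have h1 : (0:ℝ) < 1 - t := by linarith
  have h2 : t / (1 - t) + 1 ≤ Real.exp (t / (1 - t)) := Real.add_one_le_exp _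
  have h3 : t / (1 - t) + 1 = 1 / (1 - t) := by field_simp; ring
  rw [Real.exp_neg]
  rw [h3] at h2
  have h4 : (0:ℝ) < 1 / (1 - t) := by positivity
  calc (Real.exp (t / (1 - t)))⁻¹ ≤ (1 / (1 - t))⁻¹ := by
        apply inv_anti₀ h4 h2
    _ = 1 - t := by field_simp

lemma geom_partial (s : ℝ) (hs0 : 0 ≤ s) (hs1 : s < 1) (n : ℕ) :
    ∑ j ∈ range n, s ^ (j + 1) ≤ s / (1 - s) := by
  have : ∑ j ∈ range n, s ^ (j + 1) = s * ∑ j ∈ range n, s ^ j := by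
    rw [mul_sum]; exact Finset.sum_congr rfl fun j _ => by ring
  rw [this, div_eq_mul_inv]
  have hsum : ∑ j ∈ range n, s ^ j ≤ (1 - s)⁻¹ := by
    have := Summable.sum_le_tsum (range n) (fun i _ => by positivity)
      (summable_geometric_of_lt_one hs0 hs1)
    rwa [tsum_geometric_of_lt_one hs0 hs1] at this
  exact mul_le_mul_of_nonneg_left hsum hs0

section bounds
variable (q : ℂ) (hq0 : 0 < ‖q‖) (hq1 : ‖q‖ < 1)

lemma poch_ub (hq1 : ‖q‖ < 1) (n : ℕ) :
    ‖qPoch (q ^ 2) (q ^ 2) n‖ ≤ Real.exp (‖q‖ ^ 2 / (1 - ‖q‖ ^ 2)) := by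
  set s := ‖q‖ ^ 2 with hs
  have hs0 : 0 ≤ s := by positivity
  have hs1 : s < 1 := by
    have := norm_nonneg q
    nlinarith
  calc ‖qPoch (q ^ 2) (q ^ 2) n‖ ≤ ∏ j ∈ range n, (1 + s ^ (j + 1)) := by
        rw [qPoch]
        refine (Finset.norm_prod_le _ _).trans ?_
        apply Finset.prod_le_prod (fun j _ => norm_nonneg _) (fun j _ => ?_)
        calc ‖1 - q ^ 2 * (q ^ 2) ^ j‖ ≤ ‖(1:ℂ)‖ + ‖q ^ 2 * (q ^ 2) ^ j‖ := norm_sub_le _ _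
          _ = 1 + s ^ (j + 1) := by
              simp [norm_mul, norm_pow, hs, pow_succ, pow_mul]
              ring
    _ ≤ ∏ j ∈ range n, Real.exp (s ^ (j + 1)) := by
        apply Finset.prod_le_prod (fun j _ => by positivity) (fun j _ => ?_)
        linarith [Real.add_one_le_exp (s ^ (j + 1))]
    _ = Real.exp (∑ j ∈ range n, s ^ (j + 1)) := by rw [Real.exp_sum]
    _ ≤ Real.exp (s / (1 - s)) := Real.exp_le_exp.mpr (geom_partial s hs0 hs1 n)

lemma poch_lb (hq1 : ‖q‖ < 1) (n : ℕ) :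
    Real.exp (-(‖q‖ ^ 2 / (1 - ‖q‖ ^ 2) / (1 - ‖q‖ ^ 2))) ≤ ‖qPoch (q ^ 2) (q ^ 2) n‖ := by
  set s := ‖q‖ ^ 2 with hs
  have hs0 : 0 ≤ s := by positivity
  have hs1 : s < 1 := by have := norm_nonneg q; nlinarith
  have key : ∀ j : ℕ, 1 - s ^ (j + 1) ≤ ‖1 - q ^ 2 * (q ^ 2) ^ j‖ := by
    intro j
    have : ‖q ^ 2 * (q ^ 2) ^ j‖ = s ^ (j + 1) := by
      simp [norm_mul, norm_pow, hs, pow_succ, pow_mul]; ring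
    calc 1 - s ^ (j + 1) = ‖(1:ℂ)‖ - ‖q ^ 2 * (q ^ 2) ^ j‖ := by rw [this]; simp
      _ ≤ ‖1 - q ^ 2 * (q ^ 2) ^ j‖ := norm_sub_norm_le _ _
  have h2 : (0:ℝ) < 1 - s := by linarith
  calc Real.exp (-(s / (1 - s) / (1 - s)))
      ≤ Real.exp (-(∑ j ∈ range n, s ^ (j + 1)) / (1 - s)) := by
        apply Real.exp_le_exp.mpr
        rw [neg_div, neg_le_neg_iff]
        gcongr
        exact geom_partial s hs0 hs1 n
    _ = ∏ j ∈ range n, Real.exp (-(s ^ (j + 1) / (1 - s))) := by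
        rw [← Real.exp_sum]
        congr 1
        rw [neg_div, Finset.sum_div]
        simp [neg_div]
    _ ≤ ∏ j ∈ range n, (1 - s ^ (j + 1)) := by
        apply Finset.prod_le_prod (fun j _ => (Real.exp_pos _).le) (fun j _ => ?_)
        have hj0 : 0 ≤ s ^ (j + 1) := by positivity
        have hj1 : s ^ (j + 1) < 1 := by
          calc s ^ (j+1) ≤ s ^ 1 := pow_le_pow_of_le_one hs0 hs1.le (by omega)
            _ < 1 := by simpa using hs1
        calc Real.exp (-(s ^ (j + 1) / (1 - s)))
            ≤ Real.exp (-(s ^ (j + 1) / (1 - s ^ (j + 1)))) := by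
              apply Real.exp_le_exp.mpr
              apply neg_le_neg
              apply div_le_div_of_nonneg_left hj0 (by linarith)
              have : s ^ (j+1) ≤ s := by simpa using pow_le_pow_of_le_one hs0 hs1.le (show 1 ≤ j+1 by omega)
              linarith
          _ ≤ 1 - s ^ (j + 1) := exp_neg_le_one_sub hj0 hj1
    _ ≤ ‖qPoch (q ^ 2) (q ^ 2) n‖ := by
        rw [qPoch, norm_prod]
        exact Finset.prod_le_prod (fun j _ => by
          have hj1 : s ^ (j + 1) < 1 := by
            calc s ^ (j+1) ≤ s ^ 1 := pow_le_pow_of_le_one hs0 hs1.le (by omega)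
              _ < 1 := by simpa using hs1
          linarith) (fun j _ => key j)

end bounds


theorem stmt11 (q z : ℂ) (hq0 : 0 < ‖q‖) (hq1 : ‖q‖ < 1) (hz : ‖z‖ ≤ 1) :
    Filter.Tendsto (fun h : ℕ => Qc q z h) Filter.atTop (nhds 1) := by
  have hs0 : (0:ℝ) ≤ ‖q‖ ^ 2 := by positivity
  have hs1 : ‖q‖ ^ 2 < 1 := by nlinarith [norm_nonneg q]
  set c := Real.exp (-(‖q‖ ^ 2 / (1 - ‖q‖ ^ 2) / (1 - ‖q‖ ^ 2))) with hc
  set C1 := Real.exp (‖q‖ ^ 2 / (1 - ‖q‖ ^ 2)) with hC1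
  have hcpos : 0 < c := Real.exp_pos _
  set C := C1 / (c * c) with hC
  have hCpos : 0 < C := by positivity
  have hC1ge : 1 ≤ C1 := Real.one_le_exp (div_nonneg hs0 (by linarith))
  have hcle : c ≤ 1 := Real.exp_le_one_iff.mpr (by
    have h2 : (0:ℝ) < 1 - ‖q‖ ^ 2 := by linarith
    have h3 : 0 ≤ ‖q‖ ^ 2 / (1 - ‖q‖ ^ 2) / (1 - ‖q‖ ^ 2) :=
      div_nonneg (div_nonneg hs0 h2.le) h2.le
    linarith)
  have hCge : 1 ≤ C := by
    rw [hC, le_div_iff₀ (by positivity)]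
    nlinarith
  have hpochne : ∀ n, qPoch (q ^ 2) (q ^ 2) n ≠ 0 := by
    intro n hn
    have h1 := poch_lb q hq1 n
    rw [hn, norm_zero, ← hc] at h1
    exact absurd h1 (not_le.mpr hcpos)
  have hbinom : ∀ h i, ‖qBinom (q ^ 2) h i‖ ≤ C := by
    intro h i
    rw [qBinom, norm_div, norm_mul, hC]
    refine div_le_div₀ (Real.exp_pos _).le (poch_ub q hq1 h) (by positivity) ?_
    exact mul_le_mul (hc ▸ poch_lb q hq1 i) (hc ▸ poch_lb q hq1 (h - i))
      hcpos.le (norm_nonneg _)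
  -- the double-indexed family
  set f : ℕ → ℕ → ℂ := fun h i =>
    if i ≤ h then qBinom (q ^ 2) h i * q ^ ((2 * h - 1) * i) * (-z) ^ i else 0 with hf
  have hbinom0 : ∀ h : ℕ, qBinom (q ^ 2) h 0 = 1 := by
    intro h
    rw [qBinom]
    simp only [Nat.sub_zero]
    rw [show qPoch (q ^ 2) (q ^ 2) 0 = 1 by simp [qPoch], one_mul,
      div_self (hpochne h)]
  have hf0 : ∀ h : ℕ, f h 0 = 1 := by
    intro h
    simp [hf, hbinom0 h]
  have hQc : ∀ h : ℕ, Qc q z h = ∑' i, f h i := by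
    intro h
    rw [tsum_eq_sum (s := Finset.range (h + 1)) (fun i hi => by
      rw [hf]
      simp only
      rw [if_neg (fun hih => hi (Finset.mem_range.mpr (by omega)))])]
    rw [Qc]
    refine Finset.sum_congr rfl fun i hi => ?_
    rw [hf]
    simp only
    rw [if_pos (Nat.lt_succ_iff.mp (Finset.mem_range.mp hi))]
  -- norm bound on terms
  have hterm : ∀ h ≥ 1, ∀ i, ‖f h i‖ ≤ C * ‖q‖ ^ ((2 * h - 1) * i) := by
    intro h hh i
    rw [hf]
    simp only
    by_cases hih : i ≤ h
    · rw [if_pos hih, norm_mul, norm_mul, norm_pow, norm_pow, norm_neg]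
      calc ‖qBinom (q ^ 2) h i‖ * ‖q‖ ^ ((2 * h - 1) * i) * ‖z‖ ^ i
          ≤ C * ‖q‖ ^ ((2 * h - 1) * i) * 1 := by
            apply mul_le_mul
            · exact mul_le_mul_of_nonneg_right (hbinom h i) (by positivity)
            · exact pow_le_one₀ (norm_nonneg z) hz
            · positivity
            · positivity
        _ = C * ‖q‖ ^ ((2 * h - 1) * i) := by ring
    · rw [if_neg hih, norm_zero]
      positivity
  have hbound : ∀ᶠ h : ℕ in Filter.atTop, ∀ i, ‖f h i‖ ≤ C * ‖q‖ ^ i := by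
    filter_upwards [Filter.eventually_ge_atTop 1] with h hh i
    refine (hterm h hh i).trans ?_
    apply mul_le_mul_of_nonneg_left _ hCpos.le
    exact pow_le_pow_of_le_one (norm_nonneg q) hq1.le (Nat.le_mul_of_pos_left i (by omega))
  have hsum : Summable (fun i : ℕ => C * ‖q‖ ^ i) :=
    (summable_geometric_of_lt_one (norm_nonneg q) hq1).mul_left C
  have hlim : ∀ i : ℕ, Filter.Tendsto (fun h => f h i) Filter.atTop
      (nhds (if i = 0 then 1 else 0)) := by
    intro i
    rcases Nat.eq_zero_or_pos i with rfl | hi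
    · simpa [hf0] using tendsto_const_nhds (α := ℂ) (x := (1:ℂ))
    · rw [if_neg hi.ne']
      apply squeeze_zero_norm' (a := fun h : ℕ => C * ‖q‖ ^ h)
      · filter_upwards [Filter.eventually_ge_atTop 1] with h hh
        refine (hterm h hh i).trans ?_
        apply mul_le_mul_of_nonneg_left _ hCpos.le
        apply pow_le_pow_of_le_one (norm_nonneg q) hq1.le
        calc h ≤ 2 * h - 1 := by omega
          _ ≤ (2 * h - 1) * i := Nat.le_mul_of_pos_right _ hi
      · rw [show (0:ℝ) = C * 0 by ring]
        exact (tendsto_pow_atTop_nhds_zero_of_lt_one (norm_nonneg q) hq1).const_mul C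
  have key := tendsto_tsum_of_dominated_convergence hsum hlim hbound
  have : (∑' i : ℕ, if i = 0 then (1:ℂ) else 0) = 1 := by
    rw [tsum_eq_single 0 (fun b hb => if_neg hb)]
    simp
  rw [this] at key
  exact key.congr (fun h => (hQc h).symm)
end
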